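/- Let S be a finite set, and let π₀, π₁ : ℝ × S → ℝ be nonnegative joint densities with π₀(a,s) > 0 for all (a,s), each integrating to 1 (∑_{s} ∫_ℝ πᵢ(a,s) da = 1). Define ρ(a,s) = π₁(a,s)/π₀(a,s), let t : S → ℝ be a deterministic target policy, let r : ℝ × S → ℝ with r ≥ 0, let ρ̂ : ℝ × S → ℝ, and let B : ℝ × S → ℝ with B ≥ 0 and |ρ̂(a,s) − ρ(a,s)| ≤ B(a,s) for all (a,s). Suppose for each s ∈ S: a ↦ r(a,s)·π₁(a,s) is twice differentiable with |second derivative| ≤ M₁ and a ↦ B(a,s)·r(a,s)·π₀(a,s) is twice differentiable with |second derivative| ≤ M₂. Let K : ℝ → ℝ be nonnegative and integrable with ∫ K = 1, ∫ u·K(u) du = 0, and κ₂ := ∫ u²·K(u) du < ∞. Then for every h > 0, |∑_{s∈S} (1/h)·∫_ℝ K((a − t(s))/h)·ρ̂(a,s)·r(a,s)·π₀(a,s) da − ∑_{s∈S} r(t(s),s)·π₁(t(s),s)| ≤ ∑_{s∈S} B(t(s),s)·r(t(s),s)·π₀(t(s),s) + |S|·((M₁ + M₂)·κ₂/2)·h².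 -/

import Mathlib

/-!
For a fixed state write `g = ρ̂ r π₀`, `f₁ = r π₁` and `f₂ = B r π₀`, so that `|g - f₁| ≤ f₂`
pointwise. After the substitution `a = t + h u` the smoothed estimate is `∫ K(u) g(t + h u) du`.
Replacing `g` by `f₁` costs at most `∫ K(u) f₂(t + h u) du`, and for any `f` with `|f''| ≤ M`
the second-order Taylor bound together with `∫ K = 1` and `∫ u K(u) du = 0` gives
`|∫ K(u) f(t + h u) du - f(t)| ≤ M κ₂ h² / 2`. Applying this to `f₁` and `f₂` and summing over the
states gives the bound.
-/

open MeasureTheory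

lemma abs_le_of_abs_deriv_le_mul_abs_sub {g g' : ℝ → ℝ} {M x : ℝ}
    (hg : ∀ z, HasDerivAt g (g' z) z) (hgx : g x = 0)
    (hg' : ∀ z, |g' z| ≤ M * |z - x|) (y : ℝ) :
    |g y| ≤ M / 2 * (y - x) ^ 2 := by
  wlog hxy : x ≤ y generalizing g g' y
  · have hrefl := this (g := fun z => g (2 * x - z)) (g' := fun z => -g' (2 * x - z))
      (fun z => (hg _).comp_const_sub (2 * x) z) (by ring_nf; exact hgx)
      (fun z => by rw [abs_neg, ← abs_sub_comm x, show x - z = 2 * x - z - x by ring]; exact hg' _)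
      (2 * x - y) (by linarith)
    convert hrefl using 2 <;> ring_nf
  have hB : ∀ z, HasDerivAt (fun z => M / 2 * (z - x) ^ 2) (M * (z - x)) z := fun z => by
    refine ((((hasDerivAt_id' z).sub_const x).pow 2).const_mul (M / 2)).congr_deriv ?_
    push_cast; ring
  simpa using image_norm_le_of_norm_deriv_right_le_deriv_boundary
    (fun z _ => (hg z).continuousAt.continuousWithinAt) (fun z _ => (hg z).hasDerivWithinAt)
    (by simp [hgx]) hB
    (fun z hz => by simpa [abs_of_nonneg (sub_nonneg.2 hz.1)] using hg' z) ⟨hxy, le_rfl⟩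

lemma abs_sub_sub_deriv_mul_le {f : ℝ → ℝ} {M : ℝ}
    (hd : Differentiable ℝ f) (hd' : Differentiable ℝ (deriv f))
    (hM : ∀ x, |deriv (deriv f) x| ≤ M) (x y : ℝ) :
    |f y - f x - deriv f x * (y - x)| ≤ M / 2 * (y - x) ^ 2 := by
  have hlip : ∀ z, |deriv f z - deriv f x| ≤ M * |z - x| := fun z =>
    Convex.norm_image_sub_le_of_norm_deriv_le (fun w _ => hd' w) (fun w _ => hM w) convex_univ
      (Set.mem_univ x) (Set.mem_univ z)
  refine abs_le_of_abs_deriv_le_mul_abs_sub (g := fun z => f z - f x - deriv f x * (z - x))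
    (fun z => ?_) (by simp) hlip y
  exact (((hd z).hasDerivAt.sub_const (f x)).sub
    (((hasDerivAt_id' z).sub_const x).const_mul (deriv f x))).congr_deriv (by ring)

lemma abs_comp_add_mul_sub_le {f : ℝ → ℝ} {M : ℝ}
    (hd : Differentiable ℝ f) (hd' : Differentiable ℝ (deriv f))
    (hM : ∀ x, |deriv (deriv f) x| ≤ M) (t h u : ℝ) :
    |f (t + h * u) - f t - deriv f t * h * u| ≤ M / 2 * h ^ 2 * u ^ 2 := by
  simpa [mul_assoc, mul_pow] using abs_sub_sub_deriv_mul_le hd hd' hM t (t + h * u)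

structure IsSecondOrderKernel (K : ℝ → ℝ) : Prop where
  nonneg : ∀ u, 0 ≤ K u
  integrable : Integrable K
  integral_eq_one : ∫ u, K u = 1
  integrable_mul_id : Integrable fun u => u * K u
  integral_mul_id_eq_zero : ∫ u, u * K u = 0
  integrable_sq_mul : Integrable fun u => u ^ 2 * K u

namespace IsSecondOrderKernel

variable {K ψ : ℝ → ℝ} {a c C : ℝ}

theorem integrable_mul_remainder (hK : IsSecondOrderKernel K) (hψ : AEStronglyMeasurable ψ)
    (hψ₂ : ∀ u, |ψ u - a - c * u| ≤ C * u ^ 2) :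
    Integrable fun u => K u * (ψ u - a - c * u) := by
  refine (hK.integrable_sq_mul.const_mul C).mono'
    (hK.integrable.aestronglyMeasurable.mul (by fun_prop)) (ae_of_all _ fun u => ?_)
  rw [Real.norm_eq_abs, abs_mul, abs_of_nonneg (hK.nonneg u)]
  nlinarith [hψ₂ u, hK.nonneg u]

theorem integrable_mul_linear (hK : IsSecondOrderKernel K) (a c : ℝ) :
    Integrable fun u => a * K u + c * (u * K u) :=
  (hK.integrable.const_mul _).add (hK.integrable_mul_id.const_mul _)

theorem integrable_mul (hK : IsSecondOrderKernel K) (hψ : AEStronglyMeasurable ψ)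
    (hψ₂ : ∀ u, |ψ u - a - c * u| ≤ C * u ^ 2) :
    Integrable fun u => K u * ψ u := by
  refine ((hK.integrable_mul_remainder hψ hψ₂).add (hK.integrable_mul_linear a c)).congr
    (ae_of_all _ fun u => ?_)
  simp only [Pi.add_apply]
  ring

theorem abs_integral_mul_sub_le (hK : IsSecondOrderKernel K) (hψ : AEStronglyMeasurable ψ)
    (hψ₂ : ∀ u, |ψ u - a - c * u| ≤ C * u ^ 2) :
    |(∫ u, K u * ψ u) - a| ≤ C * ∫ u, u ^ 2 * K u := by
  have hR := hK.integrable_mul_remainder hψ hψ₂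
  have hlin : ∫ u, a * K u + c * (u * K u) = a := by
    rw [integral_add (hK.integrable.const_mul _) (hK.integrable_mul_id.const_mul _),
      integral_const_mul, integral_const_mul, hK.integral_eq_one, hK.integral_mul_id_eq_zero]
    ring
  have hsplit : ∫ u, K u * ψ u
      = (∫ u, K u * (ψ u - a - c * u)) + ∫ u, a * K u + c * (u * K u) := by
    rw [← integral_add hR (hK.integrable_mul_linear a c)]
    congr 1 with u
    ring
  rw [hsplit, hlin, add_sub_cancel_right, ← integral_const_mul]
  refine abs_integral_le_integral_abs.trans
    (integral_mono hR.abs (hK.integrable_sq_mul.const_mul C) fun u => ?_)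
  dsimp only
  rw [abs_mul, abs_of_nonneg (hK.nonneg u)]
  nlinarith [hψ₂ u, hK.nonneg u]

theorem abs_integral_mul_comp_sub_le (hK : IsSecondOrderKernel K) {g f₁ f₂ : ℝ → ℝ}
    (hg : Measurable g) (hgf : ∀ x, |g x - f₁ x| ≤ f₂ x) {M₁ M₂ : ℝ}
    (hf₁ : Differentiable ℝ f₁) (hf₁' : Differentiable ℝ (deriv f₁))
    (hM₁ : ∀ x, |deriv (deriv f₁) x| ≤ M₁)
    (hf₂ : Differentiable ℝ f₂) (hf₂' : Differentiable ℝ (deriv f₂))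
    (hM₂ : ∀ x, |deriv (deriv f₂) x| ≤ M₂) (t h : ℝ) :
    |(∫ u, K u * g (t + h * u)) - f₁ t| ≤ f₂ t + (M₁ + M₂) * (∫ u, u ^ 2 * K u) / 2 * h ^ 2 := by
  have hf₁c := hf₁.continuous
  have hf₂c := hf₂.continuous
  have hT₁ := abs_comp_add_mul_sub_le hf₁ hf₁' hM₁ t h
  have hT₂ := abs_comp_add_mul_sub_le hf₂ hf₂' hM₂ t h
  have hI₁ := hK.integrable_mul (by fun_prop) hT₁
  have hI₂ := hK.integrable_mul (by fun_prop) hT₂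
  have hE₁ := hK.abs_integral_mul_sub_le (by fun_prop) hT₁
  have hE₂ := hK.abs_integral_mul_sub_le (by fun_prop) hT₂
  have hpt : ∀ u, ‖K u * g (t + h * u) - K u * f₁ (t + h * u)‖ ≤ K u * f₂ (t + h * u) := by
    intro u
    rw [Real.norm_eq_abs, ← mul_sub, abs_mul, abs_of_nonneg (hK.nonneg u)]
    exact mul_le_mul_of_nonneg_left (hgf _) (hK.nonneg u)
  have hgt : AEStronglyMeasurable (fun u => K u * g (t + h * u)) :=
    hK.integrable.aestronglyMeasurable.mul (hg.comp (by fun_prop)).aestronglyMeasurable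
  have hsub : Integrable fun u => K u * g (t + h * u) - K u * f₁ (t + h * u) :=
    hI₂.mono' (hgt.sub hI₁.aestronglyMeasurable) (ae_of_all _ hpt)
  have hI : Integrable fun u => K u * g (t + h * u) :=
    (hsub.add hI₁).congr (ae_of_all _ fun u => by simp)
  have hdiff : |(∫ u, K u * g (t + h * u)) - ∫ u, K u * f₁ (t + h * u)|
      ≤ ∫ u, K u * f₂ (t + h * u) := by
    rw [← integral_sub hI hI₁, ← Real.norm_eq_abs]
    exact norm_integral_le_of_norm_le hI₂ (ae_of_all _ hpt)
  have htri := abs_sub_le (∫ u, K u * g (t + h * u)) (∫ u, K u * f₁ (t + h * u)) (f₁ t)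
  linarith [(abs_le.1 hE₂).2]

end IsSecondOrderKernel

lemma integral_comp_sub_div (F : ℝ → ℝ) (t h : ℝ) :
    ∫ a, F ((a - t) / h) = |h| * ∫ u, F u := by
  rw [integral_sub_right_eq_self (fun a => F (a / h)) t, Measure.integral_comp_div, smul_eq_mul]

lemma one_div_mul_integral_comp_sub_div_mul {h : ℝ} (hh : 0 < h) (K g : ℝ → ℝ) (t : ℝ) :
    1 / h * ∫ a, K ((a - t) / h) * g a = ∫ u, K u * g (t + h * u) := by
  have hcov := integral_comp_sub_div (fun u => K u * g (t + h * u)) t h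
  simp only [mul_div_cancel₀ _ hh.ne', add_sub_cancel, abs_of_pos hh] at hcov
  rw [hcov, ← mul_assoc, one_div_mul_cancel hh.ne', one_mul]

lemma abs_mul_mul_sub_mul_le {w r p q b : ℝ} (hq : 0 < q) (hr : 0 ≤ r) (hw : |w - p / q| ≤ b) :
    |w * r * q - r * p| ≤ b * r * q := by
  have hfactor : w * r * q - r * p = (w - p / q) * (r * q) := by field_simp
  rw [hfactor, abs_mul, abs_of_nonneg (mul_nonneg hr hq.le), mul_assoc b]
  exact mul_le_mul_of_nonneg_right hw (mul_nonneg hr hq.le)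

lemma abs_sum_sub_sum_le {ι : Type*} [Fintype ι] {a b c : ι → ℝ} {e : ℝ}
    (h : ∀ i, |a i - b i| ≤ c i + e) :
    |∑ i, a i - ∑ i, b i| ≤ ∑ i, c i + Fintype.card ι * e := by
  rw [← Finset.sum_sub_distrib, ← nsmul_eq_mul, ← Finset.card_univ, ← Finset.sum_const,
    ← Finset.sum_add_distrib]
  exact (Finset.abs_sum_le_sum_abs _ _).trans (Finset.sum_le_sum fun i _ => h i)

theorem stmt_10_general {S : Type*} [Fintype S]
    (p0 p1 : ℝ × S → ℝ) (hp0pos : ∀ x, 0 < p0 x)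
    (t : S → ℝ) (r : ℝ × S → ℝ) (hr : ∀ x, 0 ≤ r x)
    (rhoHat : ℝ × S → ℝ) (B : ℝ × S → ℝ)
    (hBbound : ∀ x, |rhoHat x - p1 x / p0 x| ≤ B x)
    (hmeas : ∀ s : S, Measurable (fun a => rhoHat (a, s) * r (a, s) * p0 (a, s)))
    (M1 M2 : ℝ)
    (hf1 : ∀ (s : S) (x : ℝ), DifferentiableAt ℝ (fun a => r (a, s) * p1 (a, s)) x)
    (hf1' : ∀ (s : S) (x : ℝ),
      DifferentiableAt ℝ (deriv (fun a => r (a, s) * p1 (a, s))) x)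
    (hf1'' : ∀ (s : S) (x : ℝ),
      |deriv (deriv (fun a => r (a, s) * p1 (a, s))) x| ≤ M1)
    (hf2 : ∀ (s : S) (x : ℝ),
      DifferentiableAt ℝ (fun a => B (a, s) * r (a, s) * p0 (a, s)) x)
    (hf2' : ∀ (s : S) (x : ℝ),
      DifferentiableAt ℝ (deriv (fun a => B (a, s) * r (a, s) * p0 (a, s))) x)
    (hf2'' : ∀ (s : S) (x : ℝ),
      |deriv (deriv (fun a => B (a, s) * r (a, s) * p0 (a, s))) x| ≤ M2)
    (K : ℝ → ℝ) (hKnonneg : ∀ u, 0 ≤ K u)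
    (hKint : Integrable K) (hK1 : ∫ u, K u = 1)
    (hKu : Integrable (fun u => u * K u)) (hKu0 : ∫ u, u * K u = 0)
    (hKu2 : Integrable (fun u => u ^ 2 * K u))
    (h : ℝ) (hh : 0 < h) :
    |(∑ s : S, (1 / h) * ∫ a, K ((a - t s) / h) *
          (rhoHat (a, s) * r (a, s) * p0 (a, s)))
        - ∑ s : S, r (t s, s) * p1 (t s, s)|
      ≤ (∑ s : S, B (t s, s) * r (t s, s) * p0 (t s, s))
        + (Fintype.card S : ℝ) * ((M1 + M2) * (∫ u, u ^ 2 * K u) / 2) * h ^ 2 := by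
  have hK : IsSecondOrderKernel K := ⟨hKnonneg, hKint, hK1, hKu, hKu0, hKu2⟩
  refine (abs_sum_sub_sum_le (e := (M1 + M2) * (∫ u, u ^ 2 * K u) / 2 * h ^ 2)
    fun s => ?_).trans_eq (by ring)
  rw [one_div_mul_integral_comp_sub_div_mul hh]
  exact hK.abs_integral_mul_comp_sub_le (hmeas s)
    (fun a => abs_mul_mul_sub_mul_le (hp0pos _) (hr _) (hBbound _))
    (hf1 s) (hf1' s) (hf1'' s) (hf2 s) (hf2' s) (hf2'' s) (t s) h

/-- Continuous-action expected bias bound (Proposition 3, continuous case):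
with observed and proposed densities `p0 > 0` and `p1 ≥ 0` on `ℝ × S`,
`ρ = p1/p0`, nonnegative rewards, estimated weights with `|rhoHat - ρ| ≤ B`
pointwise, smoothness of `a ↦ r p1` (second derivative bounded by `M1`) and of
`a ↦ B r p0` (second derivative bounded by `M2`), and a nonnegative kernel `K`
with `∫ K = 1`, vanishing first moment and second moment `κ₂`, the expected
kernel-smoothed importance sampling estimate is within
`∑_s B r p0 (t s, s) + |S| ((M1 + M2) κ₂ / 2) h²` of the counterfactual value
`∑_s r(t s, s) p1(t s, s)`. -/
theorem stmt_10 {S : Type*} [Fintype S]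
    (p0 p1 : ℝ × S → ℝ) (hp0pos : ∀ x, 0 < p0 x) (hp1nonneg : ∀ x, 0 ≤ p1 x)
    (hp0int : ∀ s : S, Integrable (fun a => p0 (a, s)))
    (hp0sum : ∑ s : S, ∫ a, p0 (a, s) = 1)
    (hp1int : ∀ s : S, Integrable (fun a => p1 (a, s)))
    (hp1sum : ∑ s : S, ∫ a, p1 (a, s) = 1)
    (t : S → ℝ) (r : ℝ × S → ℝ) (hr : ∀ x, 0 ≤ r x)
    (rhoHat : ℝ × S → ℝ) (B : ℝ × S → ℝ) (hB : ∀ x, 0 ≤ B x)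
    (hBbound : ∀ x, |rhoHat x - p1 x / p0 x| ≤ B x)
    (hmeas : ∀ s : S, Measurable (fun a => rhoHat (a, s) * r (a, s) * p0 (a, s)))
    (M1 M2 : ℝ)
    (hf1 : ∀ (s : S) (x : ℝ), DifferentiableAt ℝ (fun a => r (a, s) * p1 (a, s)) x)
    (hf1' : ∀ (s : S) (x : ℝ),
      DifferentiableAt ℝ (deriv (fun a => r (a, s) * p1 (a, s))) x)
    (hf1'' : ∀ (s : S) (x : ℝ),
      |deriv (deriv (fun a => r (a, s) * p1 (a, s))) x| ≤ M1)
    (hf2 : ∀ (s : S) (x : ℝ),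
      DifferentiableAt ℝ (fun a => B (a, s) * r (a, s) * p0 (a, s)) x)
    (hf2' : ∀ (s : S) (x : ℝ),
      DifferentiableAt ℝ (deriv (fun a => B (a, s) * r (a, s) * p0 (a, s))) x)
    (hf2'' : ∀ (s : S) (x : ℝ),
      |deriv (deriv (fun a => B (a, s) * r (a, s) * p0 (a, s))) x| ≤ M2)
    (K : ℝ → ℝ) (hKnonneg : ∀ u, 0 ≤ K u)
    (hKint : Integrable K) (hK1 : ∫ u, K u = 1)
    (hKu : Integrable (fun u => u * K u)) (hKu0 : ∫ u, u * K u = 0)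
    (hKu2 : Integrable (fun u => u ^ 2 * K u))
    (h : ℝ) (hh : 0 < h) :
    |(∑ s : S, (1 / h) * ∫ a, K ((a - t s) / h) *
          (rhoHat (a, s) * r (a, s) * p0 (a, s)))
        - ∑ s : S, r (t s, s) * p1 (t s, s)|
      ≤ (∑ s : S, B (t s, s) * r (t s, s) * p0 (t s, s))
        + (Fintype.card S : ℝ) * ((M1 + M2) * (∫ u, u ^ 2 * K u) / 2) * h ^ 2 :=
  stmt_10_general p0 p1 hp0pos t r hr rhoHat B hBbound hmeas M1 M2 hf1 hf1' hf1'' hf2 hf2' hf2'' K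
    hKnonneg hKint hK1 hKu hKu0 hKu2 h hh
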